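/- Fix 1 ≤ m ≤ n. For each j ∈ [n−m+1] let α_j = ∏_{i=1}^m x_{m−i+1, j+i−1} (the j-th antidiagonal monomial). For every generator μ = ∏_{i=1}^m x_{m−i+1,k_i} of the antidiagonal initial ideal of maximal minors (1 ≤ k₁ < … < k_m ≤ n) and every (m−1)-element subset A = {a₁<…<a_{m−1}} ⊆ {2,…,n}, there exists j ∈ [n−m+1] such that α_j divides μ·β_A. -/

import Mathlib

/-!
Let `ε` be the first row index `i ≥ 1` with `k i + 1 < a i` (or `ε = m` if there is none) and
shift the antidiagonal so that it meets `μ` in row `ε`: `j = k ε - ε + 1`. For `i < ε` the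
antidiagonal lies weakly right of `k i`, and `a i ≤ k i + 1`, so off `μ` it lies right of the
block `[a (i - 1), a i)` cut out by `D_A` in that row; for `i > ε` it lies strictly left of
that block because `k ε + 1 < a ε ≤ a (i - 1) - (i - 1 - ε)`. Hence every variable of `α_j` not in `μ` lies in
`V ∖ D_A`, i.e. divides `β_A`.
-/

open MvPolynomial Finset

/-- The set `V = {(i,j) ∈ [m]×[n] : m−i < j ≤ n−i+1}` (1-based indices). -/
def Vset (m n : ℕ) : Finset (ℕ × ℕ) :=
  ((Finset.Icc 1 m) ×ˢ (Finset.Icc 1 n)).filter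
    (fun p => m - p.1 < p.2 ∧ p.2 ≤ n - p.1 + 1)

/-- `a : ℕ → ℕ` represents an `(m−1)`-element subset `A = {a 1 < … < a (m−1)} ⊆ {2,…,n}`,
together with the conventions `a 0 = 1` and `a m = n + 1`. -/
def SubsetRep (m n : ℕ) (a : ℕ → ℕ) : Prop :=
  a 0 = 1 ∧ a m = n + 1 ∧ ∀ i < m, a i < a (i + 1)

/-- The region `D_A = {(i,j) ∈ V : a_{m−i} ≤ j < a_{m−i+1}}`. -/
def Dset (m n : ℕ) (a : ℕ → ℕ) : Finset (ℕ × ℕ) :=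
  (Vset m n).filter (fun p => a (m - p.1) ≤ p.2 ∧ p.2 < a (m - p.1 + 1))

variable (K : Type*) [Field K]

/-- The squarefree monomial `β_A = ∏_{(i,j) ∈ V ∖ D_A} x_{i,j}`. -/
noncomputable def betaM (m n : ℕ) (a : ℕ → ℕ) : MvPolynomial (ℕ × ℕ) K :=
  ∏ p ∈ Vset m n \ Dset m n a, X p

/-- The antidiagonal monomial `α_j = ∏_{i=1}^m x_{m−i+1, j+i−1}`. -/
noncomputable def alphaM (m : ℕ) (j : ℕ) : MvPolynomial (ℕ × ℕ) K :=
  ∏ i ∈ Finset.Icc 1 m, X (m - i + 1, j + i - 1)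

/-- The ideal `N` generated by the monomials `β_A` for all `(m−1)`-element subsets
`A ⊆ {2,…,n}`. -/
noncomputable def Nideal (m n : ℕ) : Ideal (MvPolynomial (ℕ × ℕ) K) :=
  Ideal.span { f | ∃ a : ℕ → ℕ, SubsetRep m n a ∧ f = betaM K m n a }

/-- `A k`, `1 ≤ k ≤ s`, is a chain `A₁ ≤ … ≤ A_s` of `(m−1)`-element subsets of `{2,…,n}`,
where `≤` is the componentwise partial order. -/
def BetaChain (m n s : ℕ) (A : ℕ → ℕ → ℕ) : Prop :=
  (∀ k, 1 ≤ k → k ≤ s → SubsetRep m n (A k)) ∧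
    (∀ k, 1 ≤ k → k + 1 ≤ s → ∀ i ≤ m, A k i ≤ A (k + 1) i)

/-- `W^{[2]}` : the ideal generated by the squares of all the monomials in `W`. -/
noncomputable def bracketTwo {σ : Type*} (W : Ideal (MvPolynomial σ K)) :
    Ideal (MvPolynomial σ K) :=
  Ideal.span { g | ∃ d : σ →₀ ℕ, (monomial d (1 : K)) ∈ W ∧ g = (monomial d (1 : K)) ^ 2 }

/-- The symbolic power `I^{(n)} = ⋂_{p ∈ Min(I)} (pⁿ R_p ∩ R)`. -/
noncomputable def symbolicPower {R : Type*} [CommRing R] (I : Ideal R) (n : ℕ) : Ideal R :=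
  ⨅ p : {q : Ideal R // q ∈ I.minimalPrimes},
    letI : p.1.IsPrime := p.2.1.1
    ((p.1 ^ n).map (algebraMap R (Localization.AtPrime p.1))).comap
      (algebraMap R (Localization.AtPrime p.1))

theorem Nat.add_sub_le_of_lt_succ {f : ℕ → ℕ} {lo hi : ℕ}
    (hf : ∀ i, lo ≤ i → i < hi → f i < f (i + 1)) {i i' : ℕ}
    (hlo : lo ≤ i) (hii' : i ≤ i') (hhi : i' ≤ hi) : f i + (i' - i) ≤ f i' := by
  induction i', hii' using Nat.le_induction with
  | base => simp
  | succ i' hii' ih =>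
    have := hf i' (hlo.trans hii') (by omega)
    have := ih (by omega)
    omega

theorem Finset.prod_dvd_prod_mul_prod {ι κ M : Type*} [CommMonoid M] [DecidableEq κ]
    {s : Finset ι} {t : Finset κ} {f : κ → M} {g h : ι → κ} (hg : Set.InjOn g s)
    (hgh : ∀ i ∈ s, g i = h i ∨ g i ∈ t) :
    ∏ i ∈ s, f (g i) ∣ (∏ i ∈ s, f (h i)) * ∏ p ∈ t, f p := by
  classical
  rw [← prod_filter_mul_prod_filter_not s (fun i => g i = h i)]
  refine mul_dvd_mul ?_ ?_
  · rw [prod_congr rfl fun i hi => congrArg f (mem_filter.1 hi).2]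
    exact prod_dvd_prod_of_subset _ _ _ (filter_subset _ _)
  · rw [← prod_image (hg.mono (coe_subset.2 (filter_subset _ _)))]
    refine prod_dvd_prod_of_subset _ _ _ fun p hp => ?_
    obtain ⟨i, hi, rfl⟩ := mem_image.1 hp
    obtain ⟨his, hne⟩ := mem_filter.1 hi
    exact (hgh i his).resolve_left hne

theorem exists_first_gap {m : ℕ} (hm : 1 ≤ m) (k a : ℕ → ℕ) :
    ∃ ε, 1 ≤ ε ∧ ε ≤ m ∧ (ε < m → k ε + 1 < a ε) ∧ ∀ i, 1 ≤ i → i < ε → a i ≤ k i + 1 := by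
  have hP : ∃ i, 1 ≤ i ∧ (m ≤ i ∨ k i + 1 < a i) := ⟨m, hm, Or.inl le_rfl⟩
  obtain ⟨hε1, hεgap⟩ := Nat.find_spec hP
  refine ⟨Nat.find hP, hε1, Nat.find_min' hP ⟨hm, Or.inl le_rfl⟩,
    fun hlt => hεgap.resolve_left (by omega), fun i hi1 hiε => ?_⟩
  have := Nat.find_min hP hiε
  omega

theorem antidiagonal_mem_Vset_sdiff_Dset {m n j i : ℕ} {a : ℕ → ℕ} (hj : 1 ≤ j)
    (hjn : j + m ≤ n + 1) (hi : i ∈ Icc 1 m)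
    (hout : j + i - 1 < a (i - 1) ∨ a i ≤ j + i - 1) :
    (m - i + 1, j + i - 1) ∈ Vset m n \ Dset m n a := by
  rw [mem_Icc] at hi
  have hV : (m - i + 1, j + i - 1) ∈ Vset m n := by
    simp only [Vset, mem_filter, mem_product, mem_Icc]
    omega
  have hrow : m - (m - i + 1) = i - 1 := by omega
  simp only [mem_sdiff, hV, Dset, mem_filter, hrow, Nat.sub_add_cancel hi.1, true_and]
  omega

theorem stmt_13 (m n : ℕ) (hm : 1 ≤ m)
    (k : ℕ → ℕ) (hk1 : 1 ≤ k 1) (hkn : k m ≤ n)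
    (hkmono : ∀ i, 1 ≤ i → i < m → k i < k (i + 1))
    (a : ℕ → ℕ) (ha : SubsetRep m n a) :
    ∃ j, 1 ≤ j ∧ j ≤ n - m + 1 ∧
      alphaM K m j ∣
        (∏ i ∈ Finset.Icc 1 m, (X (m - i + 1, k i) : MvPolynomial (ℕ × ℕ) K)) *
          betaM K m n a := by
  have hkgap {i i'} (h1 : 1 ≤ i) (h : i ≤ i') (hm' : i' ≤ m) : k i + (i' - i) ≤ k i' :=
    Nat.add_sub_le_of_lt_succ hkmono h1 h hm'
  have hagap {i i'} (h : i ≤ i') (hm' : i' ≤ m) : a i + (i' - i) ≤ a i' :=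
    Nat.add_sub_le_of_lt_succ (fun i _ => ha.2.2 i) i.zero_le h hm'
  obtain ⟨ε, hε1, hεm, hεgap, hbefore⟩ := exists_first_gap hm k a
  have hεk : k 1 + (ε - 1) ≤ k ε := hkgap le_rfl hε1 hεm
  have hkεn : k ε + (m - ε) ≤ k m := hkgap hε1 hεm le_rfl
  refine ⟨k ε - ε + 1, by omega, by omega, ?_⟩
  refine prod_dvd_prod_mul_prod (fun i hi i' hi' h => ?_) fun i hi => ?_
  · simp only [Prod.mk.injEq] at h
    simp only [coe_Icc, Set.mem_Icc] at hi hi'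
    omega
  by_cases hμ : k ε - ε + 1 + i - 1 = k i
  · exact Or.inl (by rw [hμ])
  refine Or.inr (antidiagonal_mem_Vset_sdiff_Dset (by omega) (by omega) hi ?_)
  rw [mem_Icc] at hi
  rcases lt_trichotomy i ε with hiε | rfl | hεi
  · have hki : k i + (ε - i) ≤ k ε := hkgap hi.1 hiε.le hεm
    have hai : a i ≤ k i + 1 := hbefore i hi.1 hiε
    omega
  · omega
  · have hkε : k ε + 1 < a ε := hεgap (by omega)
    have haε : a ε + (i - 1 - ε) ≤ a (i - 1) := hagap (by omega) (by omega)
    omega
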